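/- arXiv:0905.0342 — 4 statements merged into one kernel-verified Lean document; each statement's English description precedes it below -/
import Mathlib

section
/- Let f be a nonzero homogeneous polynomial of degree d in F_q[x_0,...,x_n] with d < n+1. If f has a nontrivial zero, then the number of projective points in P^n(F_q) at which f vanishes is at least 1 + q + q^2 + ... + q^(n-d). -/
/-!
The zeros of a homogeneous `f` form a cone `C ⊆ F^(n+1)` containing `0`. By Chevalley–Warning,
applied to the restriction of `f` to a subspace, `C` meets every subspace of dimension `> d`
(codimension `≤ n - d`) nontrivially. Projecting along a vector outside `C` preserves this
property and lowers the dimension by one, so induction shows `|C| ≥ q^(n-d+1)`. Each projective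
zero accounts for `q - 1` nonzero points of `C`, whence the bound `(q^(n-d+1) - 1)/(q - 1)`.
-/

open MvPolynomial Module
open scoped LinearAlgebra.Projectivization

namespace MvPolynomial

theorem IsHomogeneous.eval_smul {σ R : Type*} [CommSemiring R] {f : MvPolynomial σ R} {d : ℕ}
    (hf : f.IsHomogeneous d) (c : R) (v : σ → R) : eval (c • v) f = c ^ d * eval v f := by
  simp only [eval_eq, Finset.mul_sum]
  refine Finset.sum_congr rfl fun s hs => ?_
  simp only [Pi.smul_apply, smul_eq_mul, mul_pow, Finset.prod_mul_distrib,
    Finset.prod_pow_eq_pow_sum, ← hf.degree_eq_sum_deg_support hs]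
  ring

variable {F σ : Type*} [Field F] [Fintype F]

theorem exists_ne_zero_eval_eq_zero_of_totalDegree_lt [Fintype σ] {f : MvPolynomial σ F}
    (hdeg : f.totalDegree < Fintype.card σ) (h0 : eval 0 f = 0) :
    ∃ v ≠ 0, eval v f = 0 := by
  classical
  obtain ⟨p, _⟩ := CharP.exists F
  have hp : Fact p.Prime := ⟨CharP.char_is_prime F p⟩
  -- the number of zeros is a positive multiple of `p ≥ 2`
  have hcard : 1 < Fintype.card {v : σ → F // eval v f = 0} :=
    hp.out.one_lt.trans_le <|
      Nat.le_of_dvd (Fintype.card_pos_iff.mpr ⟨⟨0, h0⟩⟩) (char_dvd_card_solutions p hdeg)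
  obtain ⟨v, hv⟩ := Fintype.exists_ne_of_one_lt_card hcard ⟨0, h0⟩
  exact ⟨v, fun h => hv (Subtype.ext h), v.2⟩

theorem IsHomogeneous.exists_mem_ne_zero_eval_eq_zero_of_lt_finrank {f : MvPolynomial σ F}
    {d : ℕ} (hf : f.IsHomogeneous d) (h0 : eval 0 f = 0) (W : Submodule F (σ → F))
    (hW : d < finrank F W) : ∃ v ∈ W, v ≠ 0 ∧ eval v f = 0 := by
  have : FiniteDimensional F W := Module.finite_of_finrank_pos (by omega)
  let L : (Fin (finrank F W) → F) →ₗ[F] σ → F :=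
    W.subtype ∘ₗ (finBasis F W).equivFun.symm.toLinearMap
  let g := MvPolynomial.aeval (LinearMap.toMatrix' L).toMvPolynomial f
  have hg : ∀ y, eval y g = eval (L y) f := by
    intro y
    change MvPolynomial.aeval y (MvPolynomial.aeval _ f) = _
    rw [comp_aeval_apply, ← coe_aeval_eq_eval]
    simp [coe_aeval_eq_eval, Matrix.toMvPolynomial_eval_eq_apply, LinearMap.toMatrix'_mulVec]
  have hgdeg : g.totalDegree < Fintype.card (Fin (finrank F W)) := by
    simpa using ((hf.aeval _ (Matrix.toMvPolynomial_isHomogeneous _)).totalDegree_le).trans_lt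
      (by simpa using hW)
  obtain ⟨y, hy0, hy⟩ :=
    exists_ne_zero_eval_eq_zero_of_totalDegree_lt hgdeg (by rw [hg, map_zero, h0])
  refine ⟨L y, ((finBasis F W).equivFun.symm y).2, ?_, by rwa [← hg]⟩
  have hL : Function.Injective L :=
    W.injective_subtype.comp (finBasis F W).equivFun.symm.injective
  exact (map_ne_zero_iff L hL).mpr hy0

end MvPolynomial

theorem Submodule.finrank_quotient_comap_mkQ {R M : Type*} [Ring R] [AddCommGroup M] [Module R M]
    (S : Submodule R M) (W : Submodule R (M ⧸ S)) :
    finrank R (M ⧸ W.comap S.mkQ) = finrank R ((M ⧸ S) ⧸ W) := by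
  have e := quotientQuotientEquivQuotient S (W.comap S.mkQ) (le_comap_mkQ S W)
  rw [map_comap_eq_of_surjective S.mkQ_surjective] at e
  exact e.finrank_eq.symm

section Cone

variable {F V : Type*} [Field F] [AddCommGroup V] [Module F V]

theorem lt_finrank_of_forall_exists_ne_zero_mem [FiniteDimensional F V] {C : Set V} {c : ℕ}
    (hmeet : ∀ W : Submodule F V, finrank F (V ⧸ W) ≤ c → ∃ v ∈ W, v ≠ 0 ∧ v ∈ C) :
    c < finrank F V := by
  by_contra! h
  obtain ⟨v, hv, hv0, -⟩ :=
    hmeet ⊥ (by rwa [(⊥ : Submodule F V).quotEquivOfEqBot rfl |>.finrank_eq])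
  exact hv0 ((Submodule.mem_bot F).mp hv)

theorem card_pow_succ_le_card_of_meets_submodules [Fintype F] [FiniteDimensional F V]
    {C : Set V} {c : ℕ} (hsmul : ∀ (a : F), ∀ v ∈ C, a • v ∈ C)
    (hmeet : ∀ W : Submodule F V, finrank F (V ⧸ W) ≤ c → ∃ v ∈ W, v ≠ 0 ∧ v ∈ C) :
    Fintype.card F ^ (c + 1) ≤ Nat.card C := by
  obtain ⟨m, hm⟩ : ∃ m, finrank F V = m := ⟨_, rfl⟩
  induction m generalizing V with
  | zero => exact absurd (lt_finrank_of_forall_exists_ne_zero_mem hmeet) (by omega)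
  | succ m ih =>
    have h0 : (0 : V) ∈ C := by
      obtain ⟨v, -, -, hv⟩ := hmeet ⊤ (by rw [finrank_zero_of_subsingleton]; omega)
      simpa using hsmul 0 v hv
    by_cases huniv : C = Set.univ
    · rw [huniv, Nat.card_univ, Module.natCard_eq_pow_finrank (K := F), Nat.card_eq_fintype_card]
      exact Nat.pow_le_pow_right Fintype.card_pos (lt_finrank_of_forall_exists_ne_zero_mem hmeet)
    obtain ⟨u, hu⟩ := (Set.ne_univ_iff_exists_notMem C).mp huniv
    have hu0 : u ≠ 0 := by rintro rfl; exact hu h0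
    set S := Submodule.span F {u}
    -- `C` is a cone avoiding `u`, so it meets the line through `u` only in `0`
    have hker : ∀ v ∈ C, S.mkQ v = 0 → v = 0 := by
      intro v hv hπv
      obtain ⟨a, rfl⟩ :=
        Submodule.mem_span_singleton.mp ((Submodule.Quotient.mk_eq_zero S).mp hπv)
      rcases eq_or_ne a 0 with rfl | ha
      · exact zero_smul F u
      · exact absurd (by simpa [smul_smul, ha] using hsmul a⁻¹ _ hv) hu
    have hQ : finrank F (V ⧸ S) = m := by
      have := S.finrank_quotient_add_finrank
      rw [finrank_span_singleton hu0] at this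
      omega
    have : Finite V := Module.finite_of_finite F
    refine (ih (C := S.mkQ '' C) ?_ ?_ hQ).trans (Nat.card_image_le C.toFinite)
    · rintro a _ ⟨v, hv, rfl⟩
      exact ⟨a • v, hsmul a v hv, map_smul S.mkQ a v⟩
    · intro W hW
      obtain ⟨v, hvW, hv0, hvC⟩ :=
        hmeet (W.comap S.mkQ) (by rwa [Submodule.finrank_quotient_comap_mkQ])
      exact ⟨S.mkQ v, hvW, fun h => hv0 (hker v hvC h), v, hvC, rfl⟩

end Cone

theorem Projectivization.card_le_card_mk_mem_mul_add_one {F V : Type*} [Field F]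
    [AddCommGroup V] [Module F V] [Finite F] [Finite V] (C : Set V) :
    Nat.card C ≤
      Nat.card {p : ℙ F V | ∃ (v : V) (hv : v ≠ 0), mk F v hv = p ∧ v ∈ C} *
        (Nat.card F - 1) + 1 := by
  let e := nonZeroEquivProjectivizationProdUnits F V
  let φ : ↥(C \ {0}) → {p : ℙ F V | ∃ (v : V) (hv : v ≠ 0), mk F v hv = p ∧ v ∈ C} × Fˣ :=
    fun v => (⟨(e ⟨v, v.2.2⟩).1, v, v.2.2, rfl, v.2.1⟩, (e ⟨v, v.2.2⟩).2)
  have hφ : Function.Injective φ := fun v w h =>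
    Subtype.ext <| Subtype.mk.inj <| e.injective <|
      Prod.ext (congrArg (·.1.1) h) (congrArg (·.2) h)
  calc Nat.card C = C.ncard := Nat.card_coe_set_eq C
    _ ≤ (C \ {0}).ncard + ({0} : Set V).ncard := Set.ncard_le_ncard_sdiff_add_ncard _ _
    _ ≤ _ := by
      rw [Set.ncard_singleton, ← Nat.card_coe_set_eq, ← Nat.card_units, ← Nat.card_prod]
      exact Nat.add_le_add_right (Nat.card_le_card_of_injective φ hφ) 1

theorem stmt_0_general (F : Type) [Field F] [Fintype F] (n d : ℕ) (hd : d < n + 1)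
    (f : MvPolynomial (Fin (n + 1)) F) (hf : f.IsHomogeneous d)
    (hzero : ∃ v : Fin (n + 1) → F, v ≠ 0 ∧ eval v f = 0) :
    ∑ i ∈ Finset.range (n - d + 1), (Fintype.card F) ^ i ≤
      Nat.card {p : Projectivization F (Fin (n + 1) → F) |
        ∃ (v : Fin (n + 1) → F) (hv : v ≠ 0),
          Projectivization.mk F v hv = p ∧ eval v f = 0} := by
  obtain ⟨v, -, hv⟩ := hzero
  have h0 : eval 0 f = 0 := by simpa [hv] using hf.eval_smul 0 v
  have hcone : Fintype.card F ^ (n - d + 1) ≤ Nat.card {v : Fin (n + 1) → F | eval v f = 0} := by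
    refine card_pow_succ_le_card_of_meets_submodules
      (fun a v (hv : eval v f = 0) => show eval (a • v) f = 0 by rw [hf.eval_smul, hv, mul_zero])
      fun W hW => ?_
    refine hf.exists_mem_ne_zero_eval_eq_zero_of_lt_finrank h0 W ?_
    have := W.finrank_quotient_add_finrank
    rw [finrank_fin_fun] at this
    omega
  have hproj := Projectivization.card_le_card_mk_mem_mul_add_one (F := F)
    {v : Fin (n + 1) → F | eval v f = 0}
  rw [Nat.card_eq_fintype_card (α := F)] at hproj
  rw [Nat.geomSum_eq Fintype.one_lt_card]
  refine Nat.div_le_of_le_mul ?_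
  rw [mul_comm]
  exact Nat.sub_le_of_le_add (hcone.trans hproj)

theorem stmt_0 (F : Type) [Field F] [Fintype F] (n d : ℕ) (hd : d < n + 1)
    (f : MvPolynomial (Fin (n + 1)) F) (hf0 : f ≠ 0) (hf : f.IsHomogeneous d)
    (hzero : ∃ v : Fin (n + 1) → F, v ≠ 0 ∧ eval v f = 0) :
    ∑ i ∈ Finset.range (n - d + 1), (Fintype.card F) ^ i ≤
      Nat.card {p : Projectivization F (Fin (n + 1) → F) |
        ∃ (v : Fin (n + 1) → F) (hv : v ≠ 0),
          Projectivization.mk F v hv = p ∧ eval v f = 0} :=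
  stmt_0_general F n d hd f hf hzero
end

section
/- Let X ⊆ P^n(F_q) with |X| = q + q^2 + ... + q^n. Then the minimal degree of a homogeneous polynomial over F_q nonvanishing on X equals exactly n. -/
/-!
A set `X` of `q + ⋯ + q^n` points misses exactly one point `p` of `ℙⁿ(𝔽_q)`.
Identifying `𝔽_qⁿ⁺¹ / p` with `𝔽_{qⁿ}`, the norm form of `𝔽_{qⁿ}/𝔽_q` pulls back to a form of
degree `n` vanishing exactly on the line `p`. Conversely, if `f` is a form of degree `0 < d < n`
and `x_j` a coordinate with `x_j(p) ≠ 0`, Chevalley–Warning applied to `f` and `x_j` yields a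
nontrivial common zero, which is a zero of `f` on `X`.
-/

open MvPolynomial

theorem Set.exists_compl_eq_singleton_of_card_add_one {α : Type*} [Finite α] (X : Set α)
    (h : Nat.card X + 1 = Nat.card α) : ∃ p, Xᶜ = {p} := by
  rw [← Set.ncard_eq_one, ← Nat.add_left_cancel_iff (n := X.ncard), Set.ncard_add_ncard_compl,
    ← Nat.card_coe_set_eq, h]

namespace Projectivization

variable {K V : Type*} [Field K] [AddCommGroup V] [Module K V]

theorem mk_eq_iff_mem_submodule (p : Projectivization K V) {v : V} (hv : v ≠ 0) :
    mk K v hv = p ↔ v ∈ p.submodule := by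
  rw [← p.mk_rep, submodule_mk, Submodule.mem_span_singleton, mk_eq_mk_iff']

theorem finrank_quotient_submodule_add_one [FiniteDimensional K V] (p : Projectivization K V) :
    Module.finrank K (V ⧸ p.submodule) + 1 = Module.finrank K V := by
  rw [← p.finrank_submodule, Submodule.finrank_quotient_add_finrank]

theorem card_fin_succ_fun (F : Type*) [Field F] [Finite F] (n : ℕ) :
    Nat.card (Projectivization F (Fin (n + 1) → F)) =
      1 + ∑ i ∈ Finset.Icc 1 n, Nat.card F ^ i := by
  rw [card_of_finrank F _ (Module.finrank_fin_fun F), Finset.range_eq_Ico,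
    Finset.sum_eq_sum_Ico_succ_bot (Nat.succ_pos n), pow_zero]
  rfl

end Projectivization

theorem LinearMap.exists_isHomogeneous_eval_eq_det {R L M ι : Type*} [CommRing R] [Nontrivial R]
    [AddCommGroup L] [Module R L] [AddCommGroup M] [Module R M] [Module.Free R M]
    [Module.Finite R M] [Fintype ι] [DecidableEq ι]
    (φ : L →ₗ[R] Module.End R M) (b : Module.Basis ι R L) :
    ∃ f : MvPolynomial ι R, f.IsHomogeneous (Module.finrank R M) ∧
      ∀ x, eval (b.repr x) f = (φ x).det := by
  refine ⟨C ((-1) ^ Module.finrank R M) * (φ.polyCharpoly b).coeff 0,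
    (φ.polyCharpoly_coeff_isHomogeneous b 0 _ (zero_add _)).C_mul _, fun x => ?_⟩
  rw [det_eq_sign_charpoly_coeff, map_mul, eval_C, polyCharpoly_coeff_eval]

/-- The form is the norm of `𝔽_{q^m}/𝔽_q`, transported along `(ι → F) ⧸ W ≃ 𝔽_{q^m}`. -/
theorem FiniteField.exists_isHomogeneous_eval_ne_zero_iff_notMem {F ι : Type*} [Field F]
    [Finite F] [Fintype ι] [DecidableEq ι] (W : Submodule F (ι → F))
    (hW : Module.finrank F ((ι → F) ⧸ W) ≠ 0) :
    ∃ f : MvPolynomial ι F, f ≠ 0 ∧ f.IsHomogeneous (Module.finrank F ((ι → F) ⧸ W)) ∧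
      ∀ v, eval v f ≠ 0 ↔ v ∉ W := by
  set m := Module.finrank F ((ι → F) ⧸ W)
  have : NeZero m := ⟨hW⟩
  have := ringChar.charP F
  have : Fact (ringChar F).Prime := ⟨CharP.char_is_prime F (ringChar F)⟩
  set K := Extension F (ringChar F) m
  obtain ⟨e⟩ : Nonempty (((ι → F) ⧸ W) ≃ₗ[F] K) :=
    FiniteDimensional.nonempty_linearEquiv_of_finrank_eq (finrank_extension F _ m).symm
  set ψ : (ι → F) →ₗ[F] K := e.toLinearMap ∘ₗ W.mkQ
  obtain ⟨f, hf, hfe⟩ := ((Algebra.lmul F K).toLinearMap ∘ₗ ψ).exists_isHomogeneous_eval_eq_det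
    (Pi.basisFun F ι)
  have hnorm (v : ι → F) : eval v f = Algebra.norm F (ψ v) := by
    have hrepr : ⇑((Pi.basisFun F ι).repr v) = v := funext fun i => by simp
    rw [← hrepr, hfe]
    rfl
  have hf0 : f ≠ 0 := by
    obtain ⟨v, hv⟩ : ∃ v, ψ v = 1 := (e.surjective.comp W.mkQ_surjective) 1
    intro h
    simpa [h, hv] using hnorm v
  refine ⟨f, hf0, finrank_extension F _ m ▸ hf, fun v => ?_⟩
  rw [hnorm, Algebra.norm_ne_zero_iff, not_iff_not]
  simp only [ψ, LinearMap.comp_apply, LinearEquiv.coe_coe, LinearEquiv.map_eq_zero_iff,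
    Submodule.mkQ_apply, Submodule.Quotient.mk_eq_zero]

/-- Chevalley–Warning for `f` and `X j`: their common zeros number a multiple of the
characteristic, and `0` is one of them. -/
theorem MvPolynomial.exists_ne_zero_apply_eq_zero_and_eval_eq_zero {K σ : Type*} [Field K]
    [Fintype K] [Fintype σ] [DecidableEq σ] (f : MvPolynomial σ K)
    (hf : f.totalDegree + 1 < Fintype.card σ) (h0 : eval 0 f = 0) (j : σ) :
    ∃ v : σ → K, v ≠ 0 ∧ v j = 0 ∧ eval v f = 0 := by
  classical
  have := ringChar.charP K
  have hp : (ringChar K).Prime := CharP.char_is_prime K (ringChar K)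
  have hdvd := char_dvd_card_solutions_of_add_lt (ringChar K) (f₁ := f) (f₂ := X j)
    (by rwa [totalDegree_X])
  obtain ⟨⟨v, hvf, hvj⟩, hv⟩ := Fintype.exists_ne_of_one_lt_card
    (hp.one_lt.trans_le (Nat.le_of_dvd (Fintype.card_pos_iff.mpr ⟨⟨0, h0, eval_X ..⟩⟩) hdvd))
    ⟨0, h0, eval_X ..⟩
  exact ⟨v, fun h => hv (Subtype.ext h), by rwa [eval_X] at hvj, hvf⟩

theorem stmt_11 (F : Type) [Field F] [Fintype F] (n : ℕ) (hn : 1 ≤ n)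
    (X : Set (Projectivization F (Fin (n + 1) → F)))
    (hX : Nat.card X = ∑ i ∈ Finset.Icc 1 n, (Fintype.card F) ^ i) :
    IsLeast {d : ℕ | 0 < d ∧ ∃ f : MvPolynomial (Fin (n + 1)) F,
      f ≠ 0 ∧ f.IsHomogeneous d ∧
      ∀ (v : Fin (n + 1) → F) (hv : v ≠ 0),
        Projectivization.mk F v hv ∈ X → eval v f ≠ 0} n := by
  obtain ⟨p, hp⟩ := X.exists_compl_eq_singleton_of_card_add_one (by
    rw [Projectivization.card_fin_succ_fun, hX, Nat.card_eq_fintype_card, add_comm])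
  have mem_X {v} (hv : v ≠ 0) : Projectivization.mk F v hv ∈ X ↔ v ∉ p.submodule := by
    rw [← p.mk_eq_iff_mem_submodule hv, ← Set.mem_singleton_iff, ← hp, Set.mem_compl_iff,
      not_not]
  have hcodim : Module.finrank F ((Fin (n + 1) → F) ⧸ p.submodule) = n := by
    have := p.finrank_quotient_submodule_add_one
    rwa [Module.finrank_fin_fun, Nat.add_right_cancel_iff] at this
  constructor
  · obtain ⟨f, hf0, hf, hfW⟩ :=
      FiniteField.exists_isHomogeneous_eval_ne_zero_iff_notMem p.submodule (by omega)
    rw [hcodim] at hf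
    exact ⟨hn, f, hf0, hf, fun v hv hvX => (hfW v).2 ((mem_X hv).1 hvX)⟩
  · rintro d ⟨hd, f, -, hf, hfX⟩
    by_contra! hdn
    obtain ⟨j, hj⟩ := Function.ne_iff.mp p.rep_nonzero
    obtain ⟨v, hv, hvj, hvf⟩ := f.exists_ne_zero_apply_eq_zero_and_eval_eq_zero
      (by rw [Fintype.card_fin]; linarith [hf.totalDegree_le])
      (by rw [eval_zero]; exact hf.coeff_eq_zero (by rw [map_zero]; omega)) j
    refine hfX v hv ((mem_X hv).2 fun hvp => hj ?_) hvf
    obtain ⟨a, rfl⟩ := Submodule.mem_span_singleton.1 (p.submodule_eq ▸ hvp)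
    simpa [left_ne_zero_of_smul hv] using hvj
end

section
/- Let X ⊆ P^n(F_q) and let d be the largest integer such that q^(n-d+2) + q^(n-d+3) + ... + q^n < |X|. Then every homogeneous polynomial over F_q of degree less than d vanishes at some point of X; equivalently, the minimal degree of a nonvanishing form on X is at least d. -/
/-!
If a form `f` of degree `e`, `0 < e < d`, had no zero on `X`, every point of `X` would give
`q - 1` nonzeros of `f` in `F_q^(n+1)`, so `(q - 1) |X| ≤ q^(n+1) - |Z(f)|`. On the other hand
`|Z(f)| ≥ q^(n+1-e)`: by Chevalley–Warning `f` has a nontrivial zero in every subspace of dimension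
`> e`, and a scaling-invariant set `Z` with this property surjects onto `V ⧸ U`, where `U` is a
maximal subspace meeting `Z` only in `0` (so `dim U ≤ e`). Together these give
`|X| ≤ q^n + ⋯ + q^(n-e+1)`, against the choice of `d`.
-/

open MvPolynomial Module Matrix
open scoped LinearAlgebra.Projectivization

section Cone

variable {F V : Type*} [Field F] [AddCommGroup V] [Module F V] {Z : Set V}

theorem Submodule.surjective_mkQ_restrict_of_maximal (h0 : (0 : V) ∈ Z)
    (hsmul : ∀ (c : F), ∀ v ∈ Z, c • v ∈ Z) {U : Submodule F V}
    (hU : Maximal (fun U : Submodule F V => ∀ z ∈ Z, z ∈ U → z = 0) U) :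
    Function.Surjective fun z : Z => U.mkQ z := by
  intro y
  obtain ⟨v, rfl⟩ := U.mkQ_surjective y
  by_cases hv : v ∈ U
  · exact ⟨⟨0, h0⟩, ((Submodule.Quotient.mk_eq_zero U).mpr hv).symm⟩
  obtain ⟨z, hz, hzU, hz0⟩ : ∃ z ∈ Z, z ∈ U ⊔ F ∙ v ∧ z ≠ 0 := by
    have := hU.not_prop_of_gt (SetLike.lt_iff_le_and_exists.mpr
      ⟨le_sup_left, v, Submodule.mem_sup_right (Submodule.mem_span_singleton_self v), hv⟩)
    push Not at this
    exact this
  obtain ⟨u, hu, w, hw, rfl⟩ := Submodule.mem_sup.mp hzU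
  obtain ⟨a, rfl⟩ := Submodule.mem_span_singleton.mp hw
  have ha : a ≠ 0 := by
    rintro rfl
    exact hz0 (hU.prop _ hz (by simpa using hu))
  refine ⟨⟨a⁻¹ • (u + a • v), hsmul _ _ hz⟩, ?_⟩
  change Submodule.Quotient.mk _ = Submodule.Quotient.mk _
  rw [Submodule.Quotient.eq]
  simpa [smul_add, smul_smul, ha] using U.smul_mem a⁻¹ hu

theorem pow_finrank_sub_le_card_of_forall_finrank_lt [Finite F] [Finite V] (h0 : (0 : V) ∈ Z)
    (hsmul : ∀ (c : F), ∀ v ∈ Z, c • v ∈ Z) {k : ℕ}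
    (hZ : ∀ W : Submodule F V, k < finrank F W → ∃ z ∈ Z, z ∈ W ∧ z ≠ 0) :
    Nat.card F ^ (finrank F V - k) ≤ Nat.card Z := by
  have : Module.Finite F V := Module.Finite.of_finite
  obtain ⟨U, -, hU⟩ := exists_maximal_ge_of_wellFoundedGT
    (fun U : Submodule F V => ∀ z ∈ Z, z ∈ U → z = 0) ⊥ (by simp)
  have hUk : finrank F U ≤ k := by
    by_contra! h
    obtain ⟨z, hz, hzU, hz0⟩ := hZ U h
    exact hz0 (hU.prop z hz hzU)
  calc Nat.card F ^ (finrank F V - k) ≤ Nat.card F ^ (finrank F V - finrank F U) :=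
        Nat.pow_le_pow_right Nat.card_pos (by omega)
    _ = Nat.card (V ⧸ U) := by
        rw [Module.natCard_eq_pow_finrank (K := F) (V := V ⧸ U), Submodule.finrank_quotient]
    _ ≤ Nat.card Z :=
        Nat.card_le_card_of_surjective _ (U.surjective_mkQ_restrict_of_maximal h0 hsmul hU)

end Cone

namespace MvPolynomial.IsHomogeneous

variable {F σ : Type*} [Field F] {f : MvPolynomial σ F} {e : ℕ}

theorem eval_smul_s13 (hf : f.IsHomogeneous e) (c : F) (v : σ → F) :
    eval (c • v) f = c ^ e * eval v f := by
  rw [eval_eq, eval_eq, Finset.mul_sum]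
  refine Finset.sum_congr rfl fun d hd => ?_
  have hdeg : ∑ i ∈ d.support, d i = e := by
    simpa [Finsupp.weight_apply, Finsupp.sum] using hf (Finsupp.mem_support_iff.mp hd)
  simp only [Pi.smul_apply, smul_eq_mul, mul_pow, Finset.prod_mul_distrib,
    Finset.prod_pow_eq_pow_sum, hdeg]
  ring

theorem eval_zero_eq_zero (hf : f.IsHomogeneous e) (he : 0 < e) : eval 0 f = 0 := by
  rw [eval_zero]
  exact hf.coeff_eq_zero (by simpa using he.ne)

variable [Fintype F] [Fintype σ]

theorem exists_ne_zero_eval_eq_zero (hf : f.IsHomogeneous e) (he : 0 < e)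
    (hσ : e < Fintype.card σ) : ∃ x ≠ 0, eval x f = 0 := by
  classical
  obtain ⟨p, _⟩ := CharP.exists F
  have hp := CharP.char_is_prime F p
  have hdvd := char_dvd_card_solutions p (hf.totalDegree_le.trans_lt hσ)
  let zero : { x : σ → F // eval x f = 0 } := ⟨0, hf.eval_zero_eq_zero he⟩
  have hcard : 1 < Fintype.card { x : σ → F // eval x f = 0 } :=
    hp.one_lt.trans_le (Nat.le_of_dvd (Fintype.card_pos_iff.mpr ⟨zero⟩) hdvd)
  obtain ⟨⟨x, hx⟩, hx0⟩ := Fintype.exists_ne_of_one_lt_card hcard zero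
  exact ⟨x, fun h => hx0 (Subtype.ext h), hx⟩

theorem exists_mem_ne_zero_eval_eq_zero (hf : f.IsHomogeneous e) (he : 0 < e)
    (W : Submodule F (σ → F)) (hW : e < finrank F W) : ∃ z ∈ W, z ≠ 0 ∧ eval z f = 0 := by
  let b := Module.finBasis F W
  let M : Matrix σ (Fin (finrank F W)) F := Matrix.of fun i j => (b j : σ → F) i
  have hM : ∀ c, M *ᵥ c = (b.equivFun.symm c : σ → F) := by
    intro c; ext i
    simp [M, Matrix.mulVec, dotProduct, Finset.sum_apply, mul_comm]
  have hg : (bind₁ M.toMvPolynomial f).IsHomogeneous e := by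
    simpa [aeval_eq_bind₁] using hf.aeval M.toMvPolynomial M.toMvPolynomial_isHomogeneous
  obtain ⟨c, hc0, hc⟩ := hg.exists_ne_zero_eval_eq_zero he (by simpa using hW)
  refine ⟨b.equivFun.symm c, (b.equivFun.symm c).2, ?_, ?_⟩
  · simpa only [ne_eq, Submodule.coe_eq_zero, LinearEquiv.map_eq_zero_iff] using hc0
  · rw [← hM, ← hc]
    change _ = MvPolynomial.aeval c (bind₁ M.toMvPolynomial f)
    rw [aeval_bind₁]
    simp only [MvPolynomial.aeval_eq_eval, toMvPolynomial_eval_eq_apply]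

theorem pow_le_card_zeroSet (hf : f.IsHomogeneous e) (he : 0 < e) :
    Fintype.card F ^ (Fintype.card σ - e) ≤ Nat.card {v : σ → F | eval v f = 0} := by
  rw [← finrank_fintype_fun_eq_card F (η := σ), ← Nat.card_eq_fintype_card (α := F)]
  refine pow_finrank_sub_le_card_of_forall_finrank_lt (V := σ → F) (hf.eval_zero_eq_zero he)
    ?_ ?_
  · intro c v (hv : eval v f = 0)
    change eval (c • v) f = 0
    rw [hf.eval_smul_s13, hv, mul_zero]
  · intro W hW
    obtain ⟨z, hzW, hz0, hz⟩ := hf.exists_mem_ne_zero_eval_eq_zero he W hW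
    exact ⟨z, hz, hzW, hz0⟩

end MvPolynomial.IsHomogeneous

theorem Projectivization.card_sub_one_mul_card_le {F V : Type*} [DivisionRing F] [AddCommGroup V]
    [Module F V] [Finite V] (X : Set (ℙ F V)) {S : Set V}
    (hS : ∀ (v : V) (hv : v ≠ 0), mk F v hv ∈ X → v ∈ S) :
    (Nat.card F - 1) * Nat.card X ≤ Nat.card S := by
  have hmk (c : Fˣ) (P : ℙ F V) :
      mk F ((c : F) • P.rep) (smul_ne_zero c.ne_zero P.rep_nonzero) = P := by
    conv_rhs => rw [← P.mk_rep]
    exact (mk_eq_mk_iff' F _ _ _ _).mpr ⟨c, rfl⟩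
  rw [← Nat.card_units, ← Nat.card_prod]
  refine Nat.card_le_card_of_injective
    (fun cP => ⟨(cP.1 : F) • cP.2.1.rep, hS _ _ (by rw [hmk]; exact cP.2.2)⟩) ?_
  rintro ⟨c, P, hP⟩ ⟨c', P', hP'⟩ h
  have hvec : (c : F) • P.rep = (c' : F) • P'.rep := congrArg Subtype.val h
  obtain rfl : P = P' := by rw [← hmk c P, ← hmk c' P']; congr 1
  obtain rfl : c = c' := Units.ext (smul_left_injective F P.rep_nonzero hvec)
  rfl

theorem pow_le_pow_sub_add_mul_sum (q n e : ℕ) :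
    q ^ (n + 1) ≤ q ^ (n + 1 - e) + (q - 1) * ∑ i ∈ Finset.range e, q ^ (n - i) := by
  induction e with
  | zero => simp
  | succ e ih =>
    have hstep : q ^ (n + 1 - e) ≤ q ^ (n - e) + (q - 1) * q ^ (n - e) := by
      rcases le_or_gt e n with h | h
      · rw [show n + 1 - e = n - e + 1 by omega, pow_succ]
        calc q ^ (n - e) * q ≤ q ^ (n - e) * (1 + (q - 1)) := Nat.mul_le_mul_left _ (by omega)
          _ = q ^ (n - e) + (q - 1) * q ^ (n - e) := by ring
      · simp [show n + 1 - e = 0 by omega, show n - e = 0 by omega]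
    rw [Finset.sum_range_succ, show n + 1 - (e + 1) = n - e by omega]
    nlinarith

theorem stmt_13_general (F : Type) [Field F] [Fintype F] (n : ℕ)
    (X : Set (Projectivization F (Fin (n + 1) → F))) (d : ℕ)
    (hlt : ∑ i ∈ Finset.range (d - 1), (Fintype.card F) ^ (n - i) < Nat.card X) :
    ∀ e : ℕ, 0 < e → e < d → ∀ f : MvPolynomial (Fin (n + 1)) F, f.IsHomogeneous e →
      ∃ (v : Fin (n + 1) → F) (hv : v ≠ 0),
        Projectivization.mk F v hv ∈ X ∧ eval v f = 0 := by
  intro e he hed f hf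
  by_contra! hX
  set q := Fintype.card F
  set Z : Set (Fin (n + 1) → F) := {v | eval v f = 0}
  have hq : 1 < q := Fintype.one_lt_card
  have hZ : q ^ (n + 1 - e) ≤ Nat.card Z := by simpa using hf.pow_le_card_zeroSet he
  have hZc : (q - 1) * Nat.card X ≤ Nat.card (Zᶜ : Set _) := by
    rw [show q = Nat.card F from Nat.card_eq_fintype_card.symm]
    exact Projectivization.card_sub_one_mul_card_le X hX
  have hsplit : Nat.card Z + Nat.card (Zᶜ : Set _) = q ^ (n + 1) := by
    rw [Nat.card_coe_set_eq, Nat.card_coe_set_eq, Set.ncard_add_ncard_compl,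
      Nat.card_eq_fintype_card, Fintype.card_fun, Fintype.card_fin]
  have hXe : Nat.card X ≤ ∑ i ∈ Finset.range e, q ^ (n - i) :=
    Nat.le_of_mul_le_mul_left (by linarith [pow_le_pow_sub_add_mul_sum q n e])
      (by omega : 0 < q - 1)
  have hed' : ∑ i ∈ Finset.range e, q ^ (n - i) ≤ ∑ i ∈ Finset.range (d - 1), q ^ (n - i) :=
    Finset.sum_le_sum_of_subset (Finset.range_subset_range.mpr (by omega))
  omega

theorem stmt_13 (F : Type) [Field F] [Fintype F] (n : ℕ)
    (X : Set (Projectivization F (Fin (n + 1) → F))) (d : ℕ)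
    (hlt : ∑ i ∈ Finset.range (d - 1), (Fintype.card F) ^ (n - i) < Nat.card X)
    (hgreatest : ∀ d' : ℕ,
      ∑ i ∈ Finset.range (d' - 1), (Fintype.card F) ^ (n - i) < Nat.card X → d' ≤ d) :
    ∀ e : ℕ, 0 < e → e < d → ∀ f : MvPolynomial (Fin (n + 1)) F, f.IsHomogeneous e →
      ∃ (v : Fin (n + 1) → F) (hv : v ≠ 0),
        Projectivization.mk F v hv ∈ X ∧ eval v f = 0 :=
  stmt_13_general F n X d hlt
end

section
/- Let X ⊆ P^n(F_q), let d_1 be the largest integer with q^(n-d_1+2) + ... + q^n < |X| and d_2 the least integer with |X| ≤ q + ... + q^(d_2). Then d_1 ≤ Nz(X) ≤ d_2, where Nz(X) denotes the minimal degree of a homogeneous polynomial over F_q nonvanishing at every point of X. -/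
/-!
Write `q = |F|` and `V = F^(n+1)`. If `|X| < 1 + q + ⋯ + q^e`, a subspace `W` of codimension `e`
misses every point of `X`: build it one dimension at a time, since the subspaces one dimension
larger than `W` are the points of `ℙ(V/W)` and each point of `X` lies in only one of them.
Composing the quotient map `V → V/W ≅ F^e` with the norm form of the degree-`e` extension of `F`
gives a form of degree `e` that vanishes exactly on `W`; this is the upper bound.
Conversely, if a form `f` of degree `e` is nonvanishing on `X` and `|X| > q^n + ⋯ + q^(n-e+1)`,
then the complement of `X` is missed by a subspace of dimension `e + 1`, and by Chevalley–Warning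
the restriction of `f` to it has a nontrivial zero, which must lie in `X`.
-/

open MvPolynomial Module Finset
open scoped LinearAlgebra.Projectivization

lemma sum_Icc_one_pow_add_one (q d : ℕ) :
    ∑ i ∈ Icc 1 d, q ^ i + 1 = ∑ i ∈ range (d + 1), q ^ i := by
  rw [sum_range_succ', range_eq_Ico, sum_Ico_add', ← Ico_add_one_right_eq_Icc]
  simp

lemma sum_range_pow_le_add (q n e : ℕ) :
    ∑ i ∈ range (n + 1), q ^ i ≤
      ∑ i ∈ range e, q ^ (n - i) + ∑ i ∈ range (n + 1 - e), q ^ i := by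
  have hrev : ∑ i ∈ range (n + 1), q ^ i = ∑ i ∈ range (n + 1), q ^ (n - i) := by
    simpa using (sum_range_reflect (q ^ ·) (n + 1)).symm
  rcases le_total e (n + 1) with he | he
  · obtain ⟨k, hk⟩ := Nat.exists_eq_add_of_le he
    have htail : ∑ i ∈ range k, q ^ (n - (e + i)) = ∑ i ∈ range k, q ^ i := by
      rw [← sum_range_reflect _ k]
      exact sum_congr rfl fun i hi => by rw [mem_range] at hi; congr 1; omega
    rw [hrev, hk, sum_range_add, htail, Nat.add_sub_cancel_left]
  · rw [hrev]
    exact le_add_right (sum_le_sum_of_subset (range_subset_range.2 he))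

section Forms

variable {F : Type*} [Field F]

lemma exists_isHomogeneous_eval_eq_eval_linearMap {ι κ : Type*} [Fintype ι] [DecidableEq ι]
    [Fintype κ] (L : (ι → F) →ₗ[F] κ → F) {N : MvPolynomial κ F} {e : ℕ}
    (hN : N.IsHomogeneous e) :
    ∃ f : MvPolynomial ι F, f.IsHomogeneous e ∧ ∀ v, eval v f = eval (L v) N := by
  refine ⟨bind₁ (LinearMap.toMatrix' L).toMvPolynomial N, ?_, fun v => ?_⟩
  · simpa using hN.aeval _ (Matrix.toMvPolynomial_isHomogeneous (LinearMap.toMatrix' L))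
  · change eval₂Hom (RingHom.id F) v _ = _
    rw [eval₂Hom_bind₁]
    simp [Matrix.toMvPolynomial_eval_eq_apply]

variable [Finite F]

lemma exists_ne_zero_eval_eq_zero_of_isHomogeneous {σ : Type*} [Finite σ]
    {f : MvPolynomial σ F} {e : ℕ} (hf : f.IsHomogeneous e) (he : e ≠ 0)
    (hlt : e < Nat.card σ) : ∃ y ≠ 0, eval y f = 0 := by
  classical
  have := Fintype.ofFinite σ
  have := Fintype.ofFinite F
  have hzero : eval 0 f = 0 := by
    rw [eval_zero, constantCoeff_eq]
    exact hf.coeff_eq_zero (by simpa using he.symm)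
  by_contra! honly
  have hcard : Fintype.card {x : σ → F // eval x f = 0} = 1 :=
    Fintype.card_eq_one_iff.2 ⟨⟨0, hzero⟩, fun ⟨y, hy⟩ =>
      Subtype.ext (by_contra fun hy0 => honly y hy0 hy)⟩
  have hdeg : f.totalDegree < Fintype.card σ := by
    rw [Fintype.card_eq_nat_card]; exact hf.totalDegree_le.trans_lt hlt
  have := char_dvd_card_solutions (ringChar F) hdeg
  rw [hcard, Nat.dvd_one] at this
  exact CharP.ringChar_ne_one this

/-- The norm form of the degree-`k` extension of `F`, obtained as the constant coefficient of the
characteristic polynomial of multiplication by a generic element. -/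
lemma exists_isHomogeneous_eval_ne_zero {k : ℕ} (hk : k ≠ 0) :
    ∃ N : MvPolynomial (Fin k) F, N.IsHomogeneous k ∧ ∀ y ≠ 0, eval y N ≠ 0 := by
  have : NeZero k := ⟨hk⟩
  have : Fact (ringChar F).Prime := ⟨CharP.char_is_prime F _⟩
  let K := FiniteField.Extension F (ringChar F) k
  let b : Basis (Fin k) F K :=
    Module.finBasisOfFinrankEq F K (FiniteField.finrank_extension F (ringChar F) k)
  let φ := (Algebra.lmul F K).toLinearMap
  refine ⟨(φ.polyCharpoly b).coeff 0, φ.polyCharpoly_coeff_isHomogeneous b 0 k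
    (by simp [K, FiniteField.finrank_extension]), fun y hy => ?_⟩
  obtain ⟨x, rfl⟩ : ∃ x, ⇑(b.repr x) = y :=
    ⟨b.equivFun.symm y, by rw [← b.equivFun_apply, b.equivFun.apply_symm_apply]⟩
  have hx : x ≠ 0 := by rintro rfl; simp at hy
  rw [φ.polyCharpoly_coeff_eval b x 0]
  have hdet := LinearMap.det_eq_sign_charpoly_coeff (φ x)
  have hnorm : LinearMap.det (φ x) ≠ 0 := by
    simpa [φ, ← Algebra.norm_apply] using hx
  intro h0
  rw [h0, mul_zero] at hdet
  exact hnorm hdet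

lemma exists_isHomogeneous_eval_ne_zero_of_notMem {ι : Type*} [Fintype ι] [DecidableEq ι]
    {W : Submodule F (ι → F)} {e : ℕ} (he : e ≠ 0) (hW : finrank F ((ι → F) ⧸ W) = e) :
    ∃ f : MvPolynomial ι F, f.IsHomogeneous e ∧ ∀ v ∉ W, eval v f ≠ 0 := by
  obtain ⟨N, hN, hNne⟩ := exists_isHomogeneous_eval_ne_zero (F := F) he
  let c : Basis (Fin e) F ((ι → F) ⧸ W) := Module.finBasisOfFinrankEq F _ hW
  obtain ⟨f, hf, hfN⟩ :=
    exists_isHomogeneous_eval_eq_eval_linearMap (c.equivFun.toLinearMap ∘ₗ W.mkQ) hN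
  refine ⟨f, hf, fun v hv => ?_⟩
  rw [hfN]
  exact hNne _ (by simpa using hv)

end Forms

section Avoiding

variable {F V : Type*} [Field F] [Finite F] [AddCommGroup V] [Module F V] [FiniteDimensional F V]

/-- The subspaces of dimension `finrank W + 1` containing `W` are the points of `ℙ(V/W)`, and each
point of `X` lies in exactly one of them. -/
lemma exists_finrank_succ_avoiding {W : Submodule F V} {X : Set (ℙ F V)}
    (hW : ∀ v (hv : v ≠ 0), Projectivization.mk F v hv ∈ X → v ∉ W)
    (hX : Nat.card X < Nat.card (ℙ F (V ⧸ W))) :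
    ∃ W' : Submodule F V, finrank F W' = finrank F W + 1 ∧
      ∀ v (hv : v ≠ 0), Projectivization.mk F v hv ∈ X → v ∉ W' := by
  have hrep (x : X) : W.mkQ x.1.rep ≠ 0 := by
    simpa using hW _ x.1.rep_nonzero (by simp)
  let project : X → ℙ F (V ⧸ W) := fun x => Projectivization.mk F _ (hrep x)
  obtain ⟨y, hy⟩ : ∃ y, ∀ x, project x ≠ y := by
    have : Finite V := Module.finite_of_finite F
    by_contra! h
    exact (Nat.card_le_card_of_surjective project fun y => (h y).imp fun _ => id).not_gt hX
  obtain ⟨u, hu⟩ := W.mkQ_surjective y.rep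
  have huW : u ∉ W := by simpa [← hu] using y.rep_nonzero
  refine ⟨W ⊔ Submodule.span F {u}, Submodule.finrank_sup_span_singleton huW, ?_⟩
  intro v hv hvX hvW'
  obtain ⟨w, hw, z, hz, rfl⟩ := Submodule.mem_sup.1 hvW'
  obtain ⟨c, rfl⟩ := Submodule.mem_span_singleton.1 hz
  obtain ⟨a, ha⟩ := Projectivization.exists_smul_eq_mk_rep F _ hv
  apply hy ⟨_, hvX⟩
  conv_rhs => rw [← y.mk_rep]
  rw [Projectivization.mk_eq_mk_iff']
  refine ⟨a * c, ?_⟩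
  simp [← ha, ← hu, (Submodule.Quotient.mk_eq_zero W).2 hw, mul_smul, Units.smul_def]

lemma exists_submodule_finrank_avoiding (X : Set (ℙ F V)) {d : ℕ}
    (hX : Nat.card X < ∑ i ∈ range (d + 1), Nat.card F ^ i) :
    ∃ W : Submodule F V, finrank F W = finrank F V - d ∧
      ∀ v (hv : v ≠ 0), Projectivization.mk F v hv ∈ X → v ∉ W := by
  suffices ∀ k ≤ finrank F V - d, ∃ W : Submodule F V, finrank F W = k ∧
      ∀ v (hv : v ≠ 0), Projectivization.mk F v hv ∈ X → v ∉ W from this _ le_rfl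
  intro k hk
  induction k with
  | zero => exact ⟨⊥, finrank_bot F V, fun v hv _ h => hv ((Submodule.mem_bot F).1 h)⟩
  | succ k ih =>
    obtain ⟨W, rfl, hW⟩ := ih (by omega)
    refine exists_finrank_succ_avoiding hW (hX.trans_le ?_)
    rw [Projectivization.card_of_finrank F (V ⧸ W) (Submodule.finrank_quotient W)]
    exact sum_le_sum_of_subset (range_subset_range.2 (by omega))

end Avoiding

section Bounds

variable {F : Type*} [Field F] [Finite F]

theorem exists_isHomogeneous_forall_eval_ne_zero {ι : Type*} [Fintype ι] [DecidableEq ι]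
    (X : Set (ℙ F (ι → F))) {e : ℕ} (he : e ≠ 0) (heι : e ≤ Fintype.card ι)
    (hX : Nat.card X < ∑ i ∈ range (e + 1), Nat.card F ^ i) :
    ∃ f : MvPolynomial ι F, f ≠ 0 ∧ f.IsHomogeneous e ∧
      ∀ v (hv : v ≠ 0), Projectivization.mk F v hv ∈ X → eval v f ≠ 0 := by
  obtain ⟨W, hWrank, hWX⟩ := exists_submodule_finrank_avoiding X hX
  rw [finrank_fintype_fun_eq_card] at hWrank
  have hcodim : finrank F ((ι → F) ⧸ W) = e := by
    rw [Submodule.finrank_quotient, finrank_fintype_fun_eq_card]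
    omega
  obtain ⟨f, hf, hfW⟩ := exists_isHomogeneous_eval_ne_zero_of_notMem he hcodim
  obtain ⟨v, hv⟩ : ∃ v, v ∉ W := by
    by_contra! h
    rw [(Submodule.eq_top_iff'.2 h), finrank_top, finrank_fintype_fun_eq_card] at hWrank
    omega
  exact ⟨f, fun h => hfW v hv (by simp [h]), hf, fun v hv hvX => hfW v (hWX v hv hvX)⟩

theorem card_le_of_forall_eval_ne_zero {n e : ℕ} (X : Set (ℙ F (Fin (n + 1) → F)))
    {f : MvPolynomial (Fin (n + 1)) F} (he : e ≠ 0) (hf : f.IsHomogeneous e)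
    (hfX : ∀ v (hv : v ≠ 0), Projectivization.mk F v hv ∈ X → eval v f ≠ 0) :
    Nat.card X ≤ ∑ i ∈ range e, Nat.card F ^ (n - i) := by
  by_contra! hlt
  have : Finite (Fin (n + 1) → F) := Module.finite_of_finite F
  have hcompl : Nat.card ↥Xᶜ < ∑ i ∈ range (n + 1 - e), Nat.card F ^ i := by
    have := Set.ncard_add_ncard_compl X
    rw [Projectivization.card_of_finrank F _ (finrank_fin_fun F)] at this
    have := sum_range_pow_le_add (Nat.card F) n e
    rw [Nat.card_coe_set_eq] at hlt ⊢
    omega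
  have hen : e ≤ n := by
    by_contra! h
    simp [Nat.sub_eq_zero_of_le h] at hcompl
  obtain ⟨W, hWrank, hWX⟩ :=
    exists_submodule_finrank_avoiding Xᶜ (d := n - e) (by rwa [← Nat.sub_add_comm hen])
  rw [finrank_fin_fun] at hWrank
  let w : Basis (Fin (e + 1)) F W := Module.finBasisOfFinrankEq F W (by omega)
  obtain ⟨g, hg, hgf⟩ :=
    exists_isHomogeneous_eval_eq_eval_linearMap (W.subtype ∘ₗ w.equivFun.symm.toLinearMap) hf
  obtain ⟨y, hy, hgy⟩ := exists_ne_zero_eval_eq_zero_of_isHomogeneous hg he (by simp)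
  set v : Fin (n + 1) → F := ((w.equivFun.symm y : W) : Fin (n + 1) → F) with hv
  have hv0 : v ≠ 0 := by
    rwa [hv, ne_eq, Submodule.coe_eq_zero, LinearEquiv.map_eq_zero_iff]
  rw [hgf] at hgy
  by_cases hvX : Projectivization.mk F v hv0 ∈ X
  · exact hfX v hv0 hvX hgy
  · exact hWX v hv0 hvX (w.equivFun.symm y).2

end Bounds

theorem stmt_15_general (F : Type) [Field F] [Fintype F] (n : ℕ)
    (X : Set (Projectivization F (Fin (n + 1) → F))) (hXne : X.Nonempty)
    (d₁ d₂ : ℕ)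
    (hd₁lt : ∑ i ∈ Finset.range (d₁ - 1), (Fintype.card F) ^ (n - i) < Nat.card X)
    (hd₂le : Nat.card X ≤ ∑ i ∈ Finset.Icc 1 d₂, (Fintype.card F) ^ i) :
    (∃ e ≤ d₂, 0 < e ∧ ∃ f : MvPolynomial (Fin (n + 1)) F,
      f ≠ 0 ∧ f.IsHomogeneous e ∧
      ∀ (v : Fin (n + 1) → F) (hv : v ≠ 0),
        Projectivization.mk F v hv ∈ X → eval v f ≠ 0) ∧
    (∀ (e : ℕ) (f : MvPolynomial (Fin (n + 1)) F), 0 < e → f ≠ 0 →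
      f.IsHomogeneous e →
      (∀ (v : Fin (n + 1) → F) (hv : v ≠ 0),
        Projectivization.mk F v hv ∈ X → eval v f ≠ 0) → d₁ ≤ e) := by
  rw [Fintype.card_eq_nat_card] at hd₁lt hd₂le
  have : Nonempty X := hXne.to_subtype
  have hX : 0 < Nat.card X := Nat.card_pos
  have hd₂ : d₂ ≠ 0 := by
    rintro rfl
    rw [Icc_eq_empty (by omega), sum_empty] at hd₂le
    omega
  refine ⟨?_, fun e f he _ hf hfX => ?_⟩
  · have hlt : Nat.card X < ∑ i ∈ range (min d₂ (n + 1) + 1), Nat.card F ^ i := by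
      rcases le_total d₂ (n + 1) with h | h
      · rw [min_eq_left h, ← sum_Icc_one_pow_add_one]
        omega
      · rw [min_eq_right h, sum_range_succ,
          ← Projectivization.card_of_finrank F _ (finrank_fin_fun F)]
        exact (Finite.card_subtype_le _).trans_lt (Nat.lt_add_of_pos_right (pow_pos Nat.card_pos _))
    obtain ⟨f, hf0, hf, hfX⟩ := exists_isHomogeneous_forall_eval_ne_zero X (by omega)
      (by simp) hlt
    exact ⟨_, min_le_left _ _, by omega, f, hf0, hf, hfX⟩
  · have hle := card_le_of_forall_eval_ne_zero X he.ne' hf hfX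
    by_contra! h
    have := sum_le_sum_of_subset (f := fun i => Nat.card F ^ (n - i))
      (range_subset_range.2 (Nat.le_sub_one_of_lt h))
    omega

theorem stmt_15 (F : Type) [Field F] [Fintype F] (n : ℕ)
    (X : Set (Projectivization F (Fin (n + 1) → F))) (hXne : X.Nonempty)
    (d₁ d₂ : ℕ)
    (hd₁lt : ∑ i ∈ Finset.range (d₁ - 1), (Fintype.card F) ^ (n - i) < Nat.card X)
    (hd₁max : ∀ d' : ℕ,
      ∑ i ∈ Finset.range (d' - 1), (Fintype.card F) ^ (n - i) < Nat.card X → d' ≤ d₁)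
    (hd₂le : Nat.card X ≤ ∑ i ∈ Finset.Icc 1 d₂, (Fintype.card F) ^ i)
    (hd₂min : ∀ d' : ℕ,
      Nat.card X ≤ ∑ i ∈ Finset.Icc 1 d', (Fintype.card F) ^ i → d₂ ≤ d') :
    (∃ e ≤ d₂, 0 < e ∧ ∃ f : MvPolynomial (Fin (n + 1)) F,
      f ≠ 0 ∧ f.IsHomogeneous e ∧
      ∀ (v : Fin (n + 1) → F) (hv : v ≠ 0),
        Projectivization.mk F v hv ∈ X → eval v f ≠ 0) ∧
    (∀ (e : ℕ) (f : MvPolynomial (Fin (n + 1)) F), 0 < e → f ≠ 0 →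
      f.IsHomogeneous e →
      (∀ (v : Fin (n + 1) → F) (hv : v ≠ 0),
        Projectivization.mk F v hv ∈ X → eval v f ≠ 0) → d₁ ≤ e) :=
  stmt_15_general F n X hXne d₁ d₂ hd₁lt hd₂le
end
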